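/- Let X be a complex Banach space with property (α). Let (U_k)_{k=1}^∞ and (V_k)_{k=1}^∞ be sequences in L(X) with sup_n max_{ε_k=±1} ‖Σ_{k=1}^n ε_k U_k‖ ≤ M and sup_n max_{ε_k=±1} ‖Σ_{k=1}^n ε_k V_k‖ ≤ M. Let 𝒯 ⊆ L(X) be R-bounded with constant R such that every T ∈ 𝒯 commutes with every U_k and every V_k. Then there is a constant C, depending only on the property (α) constant of X, such that the family { Σ_{k=1}^n α_k T_k U_k V_k : n ∈ ℕ, |α_k| ≤ 1, T_k ∈ 𝒯 } is R-bounded with constant C·R·M². -/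

import Mathlib

/-!
Write `U k` as the average of `η_k (∑_j η_j U_j)` over all sign vectors `η ∈ {±1}^q`. Since `T` commutes with `U k`, this
pulls the `U`'s out at the cost of `M` and turns `E‖∑_i ε_i W_i x_i‖²` into a double Rademacher
average over the entries `α_ik T_ik V_k x_i`, with signs `ε_i η_k`. Property (α) removes the
coefficients `α_ik` and, since multiplying by independent signs `ξ_ik` leaves the law of
`ε_i η_k ξ_ik` unchanged, makes double Rademacher averages equivalent to simple ones over the
pairs `(i, k)`. There R-boundedness removes the `T_ik`; going back to a double average, the sign
sums of `V` give `M² E‖∑_i ε_i x_i‖²`. The constant is `C = |Cα|³`.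
-/

open MeasureTheory Complex Set Filter

noncomputable section

/-- The sign `±1` attached to a Boolean. -/
def bsign (b : Bool) : ℝ := if b then 1 else -1

section RadDefs

variable {Y : Type*} [NormedAddCommGroup Y] [NormedSpace ℂ Y]

/-- `E ‖∑ εₖ xₖ‖²`, the average over all `2^n` choices of signs. -/
def radAvg {n : ℕ} (x : Fin n → Y) : ℝ :=
  (∑ ε : Fin n → Bool, ‖∑ k, bsign (ε k) • x k‖ ^ 2) / (2 ^ n : ℝ)

/-- `max_{εₖ = ±1} ‖∑ εₖ xₖ‖`. -/
def signSup {n : ℕ} (x : Fin n → Y) : ℝ :=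
  ⨆ ε : Fin n → Bool, ‖∑ k, bsign (ε k) • x k‖

/-- `E ‖∑_{j,k} ε_j η_k x_{jk}‖²`, average over two independent families of signs. -/
def radAvg2 {n : ℕ} (x : Fin n → Fin n → Y) : ℝ :=
  (∑ ε : Fin n → Bool, ∑ η : Fin n → Bool,
    ‖∑ j, ∑ k, (bsign (ε j) * bsign (η k)) • x j k‖ ^ 2) / ((2 ^ n : ℝ) * (2 ^ n : ℝ))

end RadDefs

section Bounded

variable {X : Type*} [NormedAddCommGroup X] [NormedSpace ℂ X]

/-- Rademacher boundedness with constant `C`. -/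
def RBoundedWith (C : ℝ) (𝒯 : Set (X →L[ℂ] X)) : Prop :=
  ∀ (n : ℕ) (T : Fin n → X →L[ℂ] X), (∀ k, T k ∈ 𝒯) → ∀ x : Fin n → X,
    Real.sqrt (radAvg fun k => T k (x k)) ≤ C * Real.sqrt (radAvg x)

/-- Weak Rademacher boundedness with constant `C`. -/
def WRBoundedWith (C : ℝ) (𝒯 : Set (X →L[ℂ] X)) : Prop :=
  ∀ (n : ℕ) (T : Fin n → X →L[ℂ] X), (∀ k, T k ∈ 𝒯) →
    ∀ (x : Fin n → X) (xs : Fin n → X →L[ℂ] ℂ),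
      ∑ k, ‖xs k (T k (x k))‖ ≤ C * Real.sqrt (radAvg x) * Real.sqrt (radAvg xs)

/-- Unconditional boundedness with constant `C`. -/
def UBoundedWith (C : ℝ) (𝒯 : Set (X →L[ℂ] X)) : Prop :=
  ∀ (n : ℕ) (T : Fin n → X →L[ℂ] X), (∀ k, T k ∈ 𝒯) →
    ∀ (x : Fin n → X) (xs : Fin n → X →L[ℂ] ℂ),
      ∑ k, ‖xs k (T k (x k))‖ ≤ C * signSup x * signSup xs

end Bounded

/-- Pisier's property (α) with constant `C`. -/
def PropAlphaWith (C : ℝ) (X : Type*) [NormedAddCommGroup X] [NormedSpace ℂ X] : Prop :=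
  ∀ (n : ℕ) (x : Fin n → Fin n → X) (α : Fin n → Fin n → ℂ), (∀ j k, ‖α j k‖ ≤ 1) →
    Real.sqrt (radAvg2 fun j k => α j k • x j k) ≤ C * Real.sqrt (radAvg2 x)

/-- Property (A) with constant `C`. -/
def PropAWith (C : ℝ) (X : Type*) [NormedAddCommGroup X] [NormedSpace ℂ X] : Prop :=
  ∀ (n : ℕ) (x : Fin n → Fin n → X) (xs : Fin n → Fin n → X →L[ℂ] ℂ),
    ∑ j, ∑ k, ‖xs j k (x j k)‖ ≤ C * Real.sqrt (radAvg2 x) * Real.sqrt (radAvg2 xs)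

/-- Property (Δ) with constant `C`. -/
def PropDeltaWith (C : ℝ) (X : Type*) [NormedAddCommGroup X] [NormedSpace ℂ X] : Prop :=
  ∀ (n : ℕ) (x : Fin n → Fin n → X),
    Real.sqrt (radAvg2 fun j k => if (k : ℕ) ≤ (j : ℕ) then x j k else 0)
      ≤ C * Real.sqrt (radAvg2 x)

lemma bsign_mul_self (b : Bool) : bsign b * bsign b = 1 := by
  cases b <;> norm_num [bsign]

lemma bsign_not (b : Bool) : bsign (!b) = -bsign b := by
  cases b <;> norm_num [bsign]

lemma bsign_beq (a b : Bool) : bsign (a == b) = bsign a * bsign b := by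
  cases a <;> cases b <;> norm_num [bsign]

lemma norm_bsign_le_one (b : Bool) : ‖((bsign b : ℝ) : ℂ)‖ ≤ 1 := by
  cases b <;> norm_num [bsign]

lemma sum_bsign_mul_bsign {ι : Type*} [Fintype ι] [DecidableEq ι] (k j : ι) :
    ∑ η : ι → Bool, bsign (η k) * bsign (η j) = if k = j then 2 ^ Fintype.card ι else 0 := by
  rcases eq_or_ne k j with rfl | hkj
  · simp [bsign_mul_self]
  · rw [if_neg hkj]
    have hflip : Function.Involutive fun η : ι → Bool => Function.update η k (!η k) := by
      intro η; ext i; rcases eq_or_ne i k with rfl | hik <;> simp [Function.update_of_ne, *]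
    refine Finset.sum_involution (fun η _ => Function.update η k (!η k)) (fun η _ => ?_)
      (fun η _ _ => ?_) (fun _ _ => Finset.mem_univ _) (fun η _ => hflip η)
    · simp [Function.update_of_ne hkj.symm, bsign_not]
    · intro h
      simpa using congr_fun h k

lemma sum_bsign_smul_sum_bsign_smul {ι E : Type*} [Fintype ι] [DecidableEq ι]
    [AddCommGroup E] [Module ℝ E] (u : ι → E) (k : ι) :
    ∑ η : ι → Bool, bsign (η k) • ∑ j, bsign (η j) • u j = (2 ^ Fintype.card ι : ℝ) • u k := by
  simp_rw [Finset.smul_sum, smul_smul]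
  rw [Finset.sum_comm]
  simp_rw [← Finset.sum_smul, sum_bsign_mul_bsign, ite_smul, zero_smul, Finset.sum_ite_eq,
    Finset.mem_univ, if_true]

lemma le_sq_mul_of_sqrt_le_mul {a b c : ℝ} (ha : 0 ≤ a) (hb : 0 ≤ b)
    (h : √a ≤ c * √b) : a ≤ c ^ 2 * b := by
  rcases le_or_gt 0 c with hc | hc
  · rw [← Real.sqrt_sq hc, ← Real.sqrt_mul (sq_nonneg c)] at h
    exact (Real.sqrt_le_sqrt_iff (by positivity)).mp h
  · have : √a ≤ 0 := h.trans (mul_nonpos_of_nonpos_of_nonneg hc.le (Real.sqrt_nonneg b))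
    have ha0 : a = 0 := (Real.sqrt_eq_zero'.mp (this.antisymm (Real.sqrt_nonneg a))).antisymm ha
    rw [ha0]
    positivity

section Rademacher

variable {X : Type*} [NormedAddCommGroup X] [NormedSpace ℂ X]

lemma radAvg_nonneg {n : ℕ} (x : Fin n → X) : 0 ≤ radAvg x := by
  unfold radAvg; positivity

lemma radAvg2_nonneg {n : ℕ} (x : Fin n → Fin n → X) : 0 ≤ radAvg2 x := by
  unfold radAvg2; positivity

lemma radAvg_append_zero {m s : ℕ} (x : Fin m → X) :
    radAvg (Fin.append x (0 : Fin s → X)) = radAvg x := by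
  unfold radAvg
  rw [← (Fin.appendEquiv m s).sum_comp, Fintype.sum_prod_type]
  simp [Fin.appendEquiv, Fin.sum_univ_add, pow_add, ← Finset.mul_sum]
  field_simp

lemma RBoundedWith.radAvg_le {R : ℝ} {𝒯 : Set (X →L[ℂ] X)} (hR : RBoundedWith R 𝒯) {n : ℕ}
    {T : Fin n → X →L[ℂ] X} (hT : ∀ k, T k ∈ 𝒯) (x : Fin n → X) :
    radAvg (fun k => T k (x k)) ≤ R ^ 2 * radAvg x :=
  le_sq_mul_of_sqrt_le_mul (radAvg_nonneg _) (radAvg_nonneg _) (hR n T hT x)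

lemma RBoundedWith.radAvg_eq_zero_of_neg {R : ℝ} {𝒯 : Set (X →L[ℂ] X)} (hR : RBoundedWith R 𝒯)
    (hR0 : R < 0) (h𝒯 : 𝒯.Nonempty) {n : ℕ} (x : Fin n → X) : radAvg x = 0 := by
  obtain ⟨T, hT⟩ := h𝒯
  have h := (Real.sqrt_nonneg _).trans (hR n (fun _ => T) (fun _ => hT) x)
  have hx := nonpos_of_mul_nonneg_right h hR0
  exact (Real.sqrt_eq_zero'.mp (hx.antisymm (Real.sqrt_nonneg _))).antisymm (radAvg_nonneg x)

lemma PropAlphaWith.radAvg2_smul_le {Cα : ℝ} (hα : PropAlphaWith Cα X) {n : ℕ}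
    (x : Fin n → Fin n → X) {a : Fin n → Fin n → ℂ} (ha : ∀ j k, ‖a j k‖ ≤ 1) :
    radAvg2 (fun j k => a j k • x j k) ≤ Cα ^ 2 * radAvg2 x :=
  le_sq_mul_of_sqrt_le_mul (radAvg2_nonneg _) (radAvg2_nonneg _) (hα n x a ha)

end Rademacher

def flatten {α : Type*} {q : ℕ} (z : Fin q → Fin q → α) : Fin (q * q) → α :=
  Function.uncurry z ∘ finProdFinEquiv.symm

section Flatten

variable {X : Type*} [NormedAddCommGroup X] [NormedSpace ℂ X]

lemma radAvg_flatten {q : ℕ} (z : Fin q → Fin q → X) :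
    radAvg (flatten z) =
      (∑ ξ : Fin q → Fin q → Bool, ‖∑ i, ∑ k, bsign (ξ i k) • z i k‖ ^ 2) / 2 ^ (q * q) := by
  let E : (Fin q → Fin q → Bool) ≃ (Fin (q * q) → Bool) :=
    (Equiv.curry _ _ _).symm.trans (Equiv.arrowCongr finProdFinEquiv (Equiv.refl Bool))
  unfold radAvg
  rw [← E.sum_comp]
  congr 1
  refine Finset.sum_congr rfl fun ξ _ => ?_
  rw [← Fintype.sum_prod_type', ← finProdFinEquiv.symm.sum_comp]
  simp [E, flatten]

/-- For fixed `ε, η`, the signs `ε i * η k * ξ i k` are again independent. -/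
lemma radAvg_flatten_eq_sum_radAvg2 {q : ℕ} (z : Fin q → Fin q → X) :
    radAvg (flatten z) =
      (∑ ξ : Fin q → Fin q → Bool, radAvg2 fun i k => bsign (ξ i k) • z i k) / 2 ^ (q * q) := by
  rw [radAvg_flatten]
  congr 1
  unfold radAvg2
  rw [← Finset.sum_div, eq_div_iff (by positivity)]
  have hflip : ∀ ε η : Fin q → Bool,
      ∑ ξ : Fin q → Fin q → Bool,
        ‖∑ i, ∑ k, (bsign (ε i) * bsign (η k)) • bsign (ξ i k) • z i k‖ ^ 2 =
      ∑ ξ : Fin q → Fin q → Bool, ‖∑ i, ∑ k, bsign (ξ i k) • z i k‖ ^ 2 := by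
    intro ε η
    have hinv : Function.Involutive
        fun (ξ : Fin q → Fin q → Bool) i k => ξ i k == (ε i == η k) := by
      intro ξ; ext i k; dsimp only; cases ξ i k <;> cases (ε i == η k) <;> rfl
    refine Fintype.sum_equiv hinv.toPerm _ _ fun ξ => ?_
    simp only [Function.Involutive.coe_toPerm, bsign_beq, smul_smul]
    congr 1
    exact congrArg norm (Finset.sum_congr rfl fun i _ => Finset.sum_congr rfl fun k _ => by
      congr 1; ring)
  rw [Finset.sum_comm]
  conv_rhs => enter [2, ε]; rw [Finset.sum_comm]
  simp only [hflip, Finset.sum_const, Finset.card_univ, Fintype.card_fun, Fintype.card_bool,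
    Fintype.card_fin, nsmul_eq_mul]
  push_cast
  ring

lemma card_fin_fin_bool (q : ℕ) :
    (Fintype.card (Fin q → Fin q → Bool) : ℝ) = 2 ^ (q * q) := by
  simp [pow_mul]

lemma PropAlphaWith.radAvg_flatten_le {Cα : ℝ} (hα : PropAlphaWith Cα X) {q : ℕ}
    (z : Fin q → Fin q → X) : radAvg (flatten z) ≤ Cα ^ 2 * radAvg2 z := by
  rw [radAvg_flatten_eq_sum_radAvg2, div_le_iff₀ (by positivity)]
  calc ∑ ξ : Fin q → Fin q → Bool, radAvg2 (fun i k => bsign (ξ i k) • z i k)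
      ≤ ∑ _ξ : Fin q → Fin q → Bool, Cα ^ 2 * radAvg2 z :=
        Finset.sum_le_sum fun ξ _ =>
          hα.radAvg2_smul_le z (a := fun i k => (bsign (ξ i k) : ℂ)) fun _ _ => norm_bsign_le_one _
    _ = Cα ^ 2 * radAvg2 z * 2 ^ (q * q) := by
        rw [Finset.sum_const, Finset.card_univ, nsmul_eq_mul, card_fin_fin_bool, mul_comm]

lemma PropAlphaWith.radAvg2_le_flatten {Cα : ℝ} (hα : PropAlphaWith Cα X) {q : ℕ}
    (z : Fin q → Fin q → X) : radAvg2 z ≤ Cα ^ 2 * radAvg (flatten z) := by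
  rw [radAvg_flatten_eq_sum_radAvg2, mul_div_assoc', le_div_iff₀ (by positivity), Finset.mul_sum]
  calc radAvg2 z * 2 ^ (q * q) = ∑ _ξ : Fin q → Fin q → Bool, radAvg2 z := by
        rw [Finset.sum_const, Finset.card_univ, nsmul_eq_mul, card_fin_fin_bool, mul_comm]
    _ ≤ ∑ ξ : Fin q → Fin q → Bool, Cα ^ 2 * radAvg2 (fun i k => bsign (ξ i k) • z i k) := by
        refine Finset.sum_le_sum fun ξ _ => ?_
        have h := hα.radAvg2_smul_le (fun i k => bsign (ξ i k) • z i k)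
          (a := fun i k => (bsign (ξ i k) : ℂ)) fun _ _ => norm_bsign_le_one _
        simpa only [Complex.coe_smul, smul_smul, bsign_mul_self, one_smul] using h

end Flatten

section SignSums

variable {X Y : Type*} [NormedAddCommGroup X] [NormedSpace ℂ X]
  [NormedAddCommGroup Y] [NormedSpace ℂ Y]
  {q : ℕ}

lemma sum_sum_bsign_mul_smul_apply (U : Fin q → X →L[ℂ] Y) (x : Fin q → X) (ε η : Fin q → Bool) :
    ∑ i, ∑ k, (bsign (ε i) * bsign (η k)) • U k (x i) =
      (∑ k, bsign (η k) • U k) (∑ i, bsign (ε i) • x i) := by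
  simp only [_root_.sum_apply (F := X →L[ℂ] Y), smul_apply, map_sum,
    ContinuousLinearMap.map_smul_of_tower, smul_smul]
  rw [Finset.sum_comm]
  exact Finset.sum_congr rfl fun _ _ => Finset.sum_congr rfl fun _ _ => by rw [mul_comm]

lemma radAvg2_apply_le {U : Fin q → X →L[ℂ] Y} {M : ℝ}
    (hU : ∀ η : Fin q → Bool, ‖∑ k, bsign (η k) • U k‖ ≤ M) (x : Fin q → X) :
    radAvg2 (fun i k => U k (x i)) ≤ M ^ 2 * radAvg x := by
  have hεη : ∀ ε η : Fin q → Bool, ‖∑ i, ∑ k, (bsign (ε i) * bsign (η k)) • U k (x i)‖ ^ 2 ≤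
      M ^ 2 * ‖∑ i, bsign (ε i) • x i‖ ^ 2 := by
    intro ε η
    rw [sum_sum_bsign_mul_smul_apply, ← mul_pow]
    exact pow_le_pow_left₀ (norm_nonneg _)
      ((ContinuousLinearMap.le_opNorm _ _).trans (by gcongr; exact hU η)) 2
  calc radAvg2 (fun i k => U k (x i))
      ≤ (∑ ε : Fin q → Bool, ∑ _η : Fin q → Bool, M ^ 2 * ‖∑ i, bsign (ε i) • x i‖ ^ 2) /
          (2 ^ q * 2 ^ q) := by
        unfold radAvg2
        gcongr with ε _ η _
        exact hεη ε η
    _ = M ^ 2 * radAvg x := by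
        simp only [radAvg, Finset.sum_const, Finset.card_univ, Fintype.card_fun,
          Fintype.card_bool, Fintype.card_fin, nsmul_eq_mul, ← Finset.mul_sum]
        push_cast
        field_simp

lemma two_pow_smul_sum_bsign_smul_sum_apply (U : Fin q → X →L[ℂ] Y) (y : Fin q → Fin q → X)
    (ε : Fin q → Bool) :
    (2 ^ q : ℝ) • ∑ i, bsign (ε i) • ∑ k, U k (y i k) =
      ∑ η : Fin q → Bool,
        (∑ k, bsign (η k) • U k) (∑ i, ∑ k, (bsign (ε i) * bsign (η k)) • y i k) := by
  have hU : ∀ k v, (2 ^ q : ℝ) • U k v =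
      ∑ η : Fin q → Bool, bsign (η k) • (∑ j, bsign (η j) • U j) v := by
    intro k v
    have := congr($(sum_bsign_smul_sum_bsign_smul U k) v)
    simpa [Fintype.card_fin] using this.symm
  simp only [Finset.smul_sum, smul_comm (2 ^ q : ℝ) (bsign _), hU, map_sum,
    ContinuousLinearMap.map_smul_of_tower, smul_smul]
  conv_lhs => enter [2, i]; rw [Finset.sum_comm]
  exact Finset.sum_comm

lemma radAvg_sum_apply_le {U : Fin q → X →L[ℂ] Y} {M : ℝ}
    (hU : ∀ η : Fin q → Bool, ‖∑ k, bsign (η k) • U k‖ ≤ M) (y : Fin q → Fin q → X) :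
    radAvg (fun i => ∑ k, U k (y i k)) ≤ M ^ 2 * radAvg2 y := by
  have hε : ∀ ε : Fin q → Bool, ‖∑ i, bsign (ε i) • ∑ k, U k (y i k)‖ ^ 2 ≤
      M ^ 2 * (∑ η : Fin q → Bool, ‖∑ i, ∑ k, (bsign (ε i) * bsign (η k)) • y i k‖ ^ 2) /
        2 ^ q := by
    intro ε
    set A := ∑ i, bsign (ε i) • ∑ k, U k (y i k)
    set z : (Fin q → Bool) → X := fun η => ∑ i, ∑ k, (bsign (ε i) * bsign (η k)) • y i k
    have hA : (2 ^ q : ℝ) * ‖A‖ ≤ ∑ η, M * ‖z η‖ := calc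
      (2 ^ q : ℝ) * ‖A‖ = ‖(2 ^ q : ℝ) • A‖ := by
          rw [norm_smul, Real.norm_of_nonneg (by positivity)]
      _ = ‖∑ η, (∑ k, bsign (η k) • U k) (z η)‖ := by
          rw [two_pow_smul_sum_bsign_smul_sum_apply]
      _ ≤ ∑ η, M * ‖z η‖ := (norm_sum_le _ _).trans <| Finset.sum_le_sum fun η _ =>
          (ContinuousLinearMap.le_opNorm _ _).trans (by gcongr; exact hU η)
    have key : (2 ^ q : ℝ) * (‖A‖ ^ 2 * 2 ^ q) ≤ 2 ^ q * (M ^ 2 * ∑ η, ‖z η‖ ^ 2) := calc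
      (2 ^ q : ℝ) * (‖A‖ ^ 2 * 2 ^ q) = (2 ^ q * ‖A‖) ^ 2 := by ring
      _ ≤ (∑ η, M * ‖z η‖) ^ 2 := pow_le_pow_left₀ (by positivity) hA 2
      _ ≤ 2 ^ q * ∑ η, (M * ‖z η‖) ^ 2 := by
          simpa using sq_sum_le_card_mul_sum_sq (s := Finset.univ) (f := fun η => M * ‖z η‖)
      _ = 2 ^ q * (M ^ 2 * ∑ η, ‖z η‖ ^ 2) := by simp only [mul_pow, Finset.mul_sum]
    rw [le_div_iff₀ (by positivity)]
    exact le_of_mul_le_mul_left key (by positivity)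
  calc radAvg (fun i => ∑ k, U k (y i k))
      ≤ (∑ ε : Fin q → Bool, M ^ 2 * (∑ η : Fin q → Bool,
          ‖∑ i, ∑ k, (bsign (ε i) * bsign (η k)) • y i k‖ ^ 2) / 2 ^ q) / 2 ^ q := by
        unfold radAvg
        gcongr with ε _
        exact hε ε
    _ = M ^ 2 * radAvg2 y := by
        simp only [radAvg2, ← Finset.sum_div, ← Finset.mul_sum]
        field_simp

end SignSums

lemma Finset.sum_range_eq_sum_fin_ite {M : Type*} [AddCommMonoid M] (f : ℕ → M) {n q : ℕ}
    (h : n ≤ q) : ∑ k ∈ Finset.range n, f k = ∑ k : Fin q, if (k : ℕ) < n then f k else 0 := by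
  rw [Fin.sum_univ_eq_sum_range (fun k => if k < n then f k else 0), Finset.sum_ite,
    Finset.sum_const_zero, add_zero]
  congr 1
  ext k
  simp only [Finset.mem_range, Finset.mem_filter]
  omega

lemma norm_sum_fin_bsign_smul_le {E : Type*} [SeminormedAddCommGroup E] [Module ℝ E]
    {u : ℕ → E} {M : ℝ}
    (hu : ∀ (n : ℕ) (ε : ℕ → Bool), ‖∑ k ∈ Finset.range n, bsign (ε k) • u k‖ ≤ M)
    {q : ℕ} (η : Fin q → Bool) : ‖∑ k : Fin q, bsign (η k) • u k‖ ≤ M := by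
  simpa [Finset.sum_range] using hu q fun k => if h : k < q then η ⟨k, h⟩ else true

section Main

variable {X : Type*} [NormedAddCommGroup X] [NormedSpace ℂ X] {Cα R M : ℝ}
  {𝒯 : Set (X →L[ℂ] X)}

lemma radAvg_sum_smul_apply_le (hα : PropAlphaWith Cα X) (hR : RBoundedWith R 𝒯) {q : ℕ}
    {U V : Fin q → X →L[ℂ] X} (hU : ∀ η : Fin q → Bool, ‖∑ k, bsign (η k) • U k‖ ≤ M)
    (hV : ∀ η : Fin q → Bool, ‖∑ k, bsign (η k) • V k‖ ≤ M)
    {a : Fin q → Fin q → ℂ} (ha : ∀ i k, ‖a i k‖ ≤ 1)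
    {T : Fin q → Fin q → X →L[ℂ] X} (hT : ∀ i k, T i k ∈ 𝒯)
    (hTU : ∀ i k, T i k ∘L U k = U k ∘L T i k) (x : Fin q → X) :
    radAvg (fun i => ∑ k, a i k • T i k (U k (V k (x i)))) ≤
      (Cα ^ 3 * R * M ^ 2) ^ 2 * radAvg x := by
  have hpull : ∀ i k, a i k • T i k (U k (V k (x i))) = U k (a i k • T i k (V k (x i))) :=
    fun i k => by
      rw [map_smul, ← ContinuousLinearMap.comp_apply, hTU, ContinuousLinearMap.comp_apply]
  calc radAvg (fun i => ∑ k, a i k • T i k (U k (V k (x i))))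
      = radAvg (fun i => ∑ k, U k (a i k • T i k (V k (x i)))) := by simp only [hpull]
    _ ≤ M ^ 2 * radAvg2 (fun i k => a i k • T i k (V k (x i))) := radAvg_sum_apply_le hU _
    _ ≤ M ^ 2 * (Cα ^ 2 * radAvg2 (fun i k => T i k (V k (x i)))) := by
        gcongr; exact hα.radAvg2_smul_le _ ha
    _ ≤ M ^ 2 * (Cα ^ 2 * (Cα ^ 2 * radAvg (flatten fun i k => T i k (V k (x i))))) := by
        gcongr; exact hα.radAvg2_le_flatten _
    _ ≤ M ^ 2 * (Cα ^ 2 * (Cα ^ 2 * (R ^ 2 * radAvg (flatten fun i k => V k (x i))))) := by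
        gcongr; exact hR.radAvg_le (T := flatten T) (fun _ => hT _ _) _
    _ ≤ M ^ 2 * (Cα ^ 2 * (Cα ^ 2 * (R ^ 2 * (Cα ^ 2 * radAvg2 fun i k => V k (x i))))) := by
        gcongr; exact hα.radAvg_flatten_le _
    _ ≤ M ^ 2 * (Cα ^ 2 * (Cα ^ 2 * (R ^ 2 * (Cα ^ 2 * (M ^ 2 * radAvg x))))) := by
        gcongr; exact radAvg2_apply_le hV x
    _ = (Cα ^ 3 * R * M ^ 2) ^ 2 * radAvg x := by ring

/-- Property (α) concerns square arrays, so the `m` rows of lengths `n i` are padded to size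
`m + max n` with zero coefficients and zero vectors. -/
lemma radAvg_apply_le_of_forall_exists_sum (hα : PropAlphaWith Cα X) (hR : RBoundedWith R 𝒯)
    (h𝒯 : 𝒯.Nonempty) {U V : ℕ → X →L[ℂ] X}
    (hU : ∀ (n : ℕ) (ε : ℕ → Bool), ‖∑ k ∈ Finset.range n, bsign (ε k) • U k‖ ≤ M)
    (hV : ∀ (n : ℕ) (ε : ℕ → Bool), ‖∑ k ∈ Finset.range n, bsign (ε k) • V k‖ ≤ M)
    (hTU : ∀ T ∈ 𝒯, ∀ k, T ∘L U k = U k ∘L T) {m : ℕ} {W : Fin m → X →L[ℂ] X}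
    (hW : ∀ i, ∃ (n : ℕ) (α : ℕ → ℂ) (T : ℕ → X →L[ℂ] X), (∀ k, ‖α k‖ ≤ 1) ∧ (∀ k, T k ∈ 𝒯) ∧
      W i = ∑ k ∈ Finset.range n, α k • (T k ∘L U k ∘L V k))
    (x : Fin m → X) :
    radAvg (fun i => W i (x i)) ≤ (Cα ^ 3 * R * M ^ 2) ^ 2 * radAvg x := by
  choose n α T hα1 hT hWeq using hW
  obtain ⟨T₀, hT₀⟩ := h𝒯
  set N := Finset.univ.sup n
  have hn : ∀ i, n i ≤ m + N := fun i => (Finset.le_sup (Finset.mem_univ i)).trans (by omega)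
  let a : Fin (m + N) → Fin (m + N) → ℂ :=
    Fin.append (fun i k => if (k : ℕ) < n i then α i k else 0) 0
  let T' : Fin (m + N) → Fin (m + N) → X →L[ℂ] X :=
    Fin.append (fun i k => T i k) (fun _ _ => T₀)
  have ha : ∀ i k, ‖a i k‖ ≤ 1 := by
    refine Fin.addCases (fun i k => ?_) (fun i k => ?_) <;> simp only [a, Fin.append_left,
      Fin.append_right]
    · split_ifs <;> simp [hα1]
    · simp
  have hT' : ∀ i k, T' i k ∈ 𝒯 :=
    Fin.addCases (fun i k => by simpa [T'] using hT i k) (fun i k => by simpa [T'] using hT₀)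
  have hrows : Fin.append (fun i => W i (x i)) 0 =
      fun i => ∑ k, a i k • T' i k (U k (V k (Fin.append x 0 i))) := by
    ext i
    refine Fin.addCases (fun i => ?_) (fun i => ?_) i
    · simp [a, T', hWeq, Finset.sum_range_eq_sum_fin_ite _ (hn i), ite_smul]
    · simp [a]
  calc radAvg (fun i => W i (x i)) = radAvg (Fin.append (fun i => W i (x i)) (0 : Fin N → X)) :=
        (radAvg_append_zero _).symm
    _ ≤ (Cα ^ 3 * R * M ^ 2) ^ 2 * radAvg (Fin.append x (0 : Fin N → X)) := by
        rw [hrows]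
        exact radAvg_sum_smul_apply_le hα hR (norm_sum_fin_bsign_smul_le hU)
          (norm_sum_fin_bsign_smul_le hV) ha hT' (fun i k => hTU _ (hT' i k) k) _
    _ = (Cα ^ 3 * R * M ^ 2) ^ 2 * radAvg x := by rw [radAvg_append_zero]

end Main

/-- In a space with property (α) (with constant `Cα`), if the sign-sums of
`(U_k)` and `(V_k)` are uniformly bounded by `M` and `𝒯` is an R-bounded family (constant `R`)
commuting with all `U_k, V_k`, then `{∑_k α_k T_k U_k V_k : |α_k| ≤ 1, T_k ∈ 𝒯}` is
R-bounded with constant `C·R·M²`, where `C` depends only on the property (α) constant. -/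
theorem stmt_4 : ∀ Cα : ℝ, ∃ C : ℝ,
    ∀ (X : Type) [NormedAddCommGroup X] [NormedSpace ℂ X] [CompleteSpace X],
    PropAlphaWith Cα X →
    ∀ (U V : ℕ → X →L[ℂ] X) (M R : ℝ) (𝒯 : Set (X →L[ℂ] X)),
      (∀ (n : ℕ) (ε : ℕ → Bool), ‖∑ k ∈ Finset.range n, bsign (ε k) • U k‖ ≤ M) →
      (∀ (n : ℕ) (ε : ℕ → Bool), ‖∑ k ∈ Finset.range n, bsign (ε k) • V k‖ ≤ M) →
      RBoundedWith R 𝒯 →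
      (∀ T ∈ 𝒯, ∀ k : ℕ, T ∘L U k = U k ∘L T ∧ T ∘L V k = V k ∘L T) →
      RBoundedWith (C * R * M ^ 2)
        {W | ∃ (n : ℕ) (α : ℕ → ℂ) (T : ℕ → X →L[ℂ] X),
          (∀ k, ‖α k‖ ≤ 1) ∧ (∀ k, T k ∈ 𝒯) ∧
          W = ∑ k ∈ Finset.range n, α k • (T k ∘L U k ∘L V k)} := by
  intro Cα
  refine ⟨|Cα| ^ 3, fun X _ _ _ hα U V M R 𝒯 hU hV hR hcomm m W hW x => ?_⟩
  rcases Nat.eq_zero_or_pos m with rfl | hm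
  · simp [radAvg]
  have h𝒯 : 𝒯.Nonempty := by
    obtain ⟨_, _, T, _, hT, _⟩ := hW ⟨0, hm⟩
    exact ⟨T 0, hT 0⟩
  rcases lt_or_ge R 0 with hR0 | hR0
  · simp [hR.radAvg_eq_zero_of_neg hR0 h𝒯]
  have hsq := radAvg_apply_le_of_forall_exists_sum hα hR h𝒯 hU hV
    (fun T hT k => (hcomm T hT k).1) hW x
  calc √(radAvg fun k => W k (x k)) ≤ √((Cα ^ 3 * R * M ^ 2) ^ 2 * radAvg x) :=
        Real.sqrt_le_sqrt hsq
    _ = |Cα| ^ 3 * R * M ^ 2 * √(radAvg x) := by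
        rw [Real.sqrt_mul (sq_nonneg _), Real.sqrt_sq_eq_abs, abs_mul, abs_mul, abs_pow,
          abs_of_nonneg hR0, abs_of_nonneg (sq_nonneg M)]
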